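/- The induced subposet, on 132-avoiding permutations of {1,...,n}, of the componentwise order on zero-count vectors (σ ≤ τ iff c_i(σ) ≤ c_i(τ) for all i) is isomorphic to the Tamari lattice of order n realized via Huang–Tamari bracket vectors with reverse componentwise comparison. -/

import Mathlib

/-- The zero-count vector of `σ` at position `p`. -/
def cCount {n : ℕ} (σ : Equiv.Perm (Fin n)) (p : Fin n) : ℕ :=
  (Finset.univ.filter (fun k : Fin n => k < p ∧ σ p < σ k)).card

namespace Stmt13Aux

open Finset

variable {n : ℕ}

lemma card_filter_val_lt (m : ℕ) (hm : m ≤ n) :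
    ((Finset.univ : Finset (Fin n)).filter (fun k => k.val < m)).card = m := by
  have h : ∀ a ∈ Finset.range m, a < n := fun a ha => lt_of_lt_of_le (mem_range.mp ha) hm
  have : (Finset.univ : Finset (Fin n)).filter (fun k => k.val < m)
      = (Finset.range m).attachFin h := by
    ext a
    simp [Finset.mem_attachFin]
  rw [this, Finset.card_attachFin, Finset.card_range]

lemma cCount_le (σ : Equiv.Perm (Fin n)) (p : Fin n) : cCount σ p ≤ p.val := by
  have : (Finset.univ.filter (fun k : Fin n => k < p ∧ σ p < σ k)) ⊆ Finset.Iio p := by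
    intro k hk
    simp only [mem_filter] at hk
    exact Finset.mem_Iio.mpr hk.2.1
  simpa [cCount, Fin.card_Iio] using (Finset.card_le_card this)

def Avoids (σ : Equiv.Perm (Fin n)) : Prop :=
  ¬ ∃ i j k : Fin n, i < j ∧ j < k ∧ σ i < σ k ∧ σ k < σ j

lemma char {σ : Equiv.Perm (Fin n)} (h : Avoids σ) {p k : Fin n} (hk : k < p) :
    σ p < σ k ↔ k.val < cCount σ p := by
  set S := Finset.univ.filter (fun k : Fin n => k < p ∧ σ p < σ k) with hS
  have hSc : cCount σ p = S.card := rfl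
  have hdown : ∀ i j : Fin n, i ≤ j → j ∈ S → i ∈ S := by
    intro i j hij hj
    simp only [hS, mem_filter, mem_univ, true_and] at hj ⊢
    rcases eq_or_lt_of_le hij with rfl | hij
    · exact hj
    refine ⟨lt_trans hij hj.1, ?_⟩
    by_contra hc
    push_neg at hc
    have hne : σ i ≠ σ p := fun he => (ne_of_lt (lt_trans hij hj.1)) (σ.injective he)
    have : σ i < σ p := lt_of_le_of_ne hc hne
    exact h ⟨i, j, p, hij, hj.1, this, hj.2⟩
  constructor
  · intro hlt
    have hk' : k ∈ S := by simp [hS, hk, hlt]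
    have : Finset.Iic k ⊆ S := fun i hi => hdown i k (Finset.mem_Iic.mp hi) hk'
    have := Finset.card_le_card this
    rw [Fin.card_Iic] at this
    omega
  · intro hlt
    by_contra hc
    have hkS : k ∉ S := by simp [hS, hk, hc]
    have : S ⊆ Finset.Iio k := by
      intro j hj
      rw [Finset.mem_Iio]
      by_contra hjk
      push_neg at hjk
      exact hkS (hdown k j hjk hj)
    have := Finset.card_le_card this
    rw [Fin.card_Iio] at this
    omega

lemma star {σ : Equiv.Perm (Fin n)} (h : Avoids σ) :
    ∀ q p : Fin n, q ≤ p → cCount σ p ≤ q.val → cCount σ p ≤ cCount σ q := by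
  intro q p hqp hcq
  rcases eq_or_lt_of_le hqp with rfl | hqp
  · exact le_refl _
  have hq : σ q < σ p := by
    have := (char h hqp).not
    push_neg at this
    have h1 : ¬ σ p < σ q := by
      intro hx
      exact absurd ((char h hqp).mp hx) (by omega)
    have hne : σ q ≠ σ p := fun he => (ne_of_lt hqp) (σ.injective he)
    exact lt_of_le_of_ne (not_lt.mp h1) hne
  have hsub : (Finset.univ : Finset (Fin n)).filter (fun k => k.val < cCount σ p)
      ⊆ Finset.univ.filter (fun k : Fin n => k < q ∧ σ q < σ k) := by
    intro k hk
    simp only [mem_filter, mem_univ, true_and] at hk ⊢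
    have hkq : k < q := by
      rw [Fin.lt_def]; omega
    have hkp : k < p := lt_trans hkq hqp
    have : σ p < σ k := (char h hkp).mpr hk
    exact ⟨hkq, lt_trans hq this⟩
  have := Finset.card_le_card hsub
  rwa [card_filter_val_lt (cCount σ p) (by have := cCount_le σ p; omega)] at this

lemma star2 {σ : Equiv.Perm (Fin n)}
    (h : ∀ q p : Fin n, q ≤ p → cCount σ p ≤ q.val → cCount σ p ≤ cCount σ q) :
    Avoids σ := by
  rintro ⟨i, j, p, hij, hjp, h1, h2⟩
  set T := Finset.univ.filter
    (fun j' : Fin n => j' < p ∧ σ p < σ j' ∧ ∃ i' : Fin n, i' < j' ∧ σ i' < σ p) with hT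
  have hTne : T.Nonempty :=
    ⟨j, by simp only [hT, mem_filter, mem_univ, true_and]; exact ⟨hjp, h2, i, hij, h1⟩⟩
  set m := T.max' hTne with hm
  have hmT : m ∈ T := T.max'_mem hTne
  simp only [hT, mem_filter, mem_univ, true_and] at hmT
  obtain ⟨hmp, hσm, i', hi'm, hσi'⟩ := hmT
  -- claim 1 : cCount σ p ≤ m.val
  have hc1 : cCount σ p ≤ m.val := by
    have hsub : Finset.univ.filter (fun k : Fin n => k < p ∧ σ p < σ k)
        ⊆ (Finset.Iic m).erase i' := by
      intro k hk
      simp only [mem_filter, mem_univ, true_and] at hk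
      rw [Finset.mem_erase, Finset.mem_Iic]
      constructor
      · rintro rfl
        exact absurd hσi' (asymm hk.2)
      · by_contra hmk
        push_neg at hmk
        have : k ∈ T := by
          simp only [hT, mem_filter, mem_univ, true_and]
          exact ⟨hk.1, hk.2, i', lt_trans hi'm hmk, hσi'⟩
        exact absurd (T.le_max' k this) (not_le.mpr hmk)
    have := Finset.card_le_card hsub
    rw [Finset.card_erase_of_mem (Finset.mem_Iic.mpr (le_of_lt hi'm)), Fin.card_Iic] at this
    simpa [cCount] using by omega
  -- claim 2 : cCount σ m < cCount σ p
  have hc2 : cCount σ m < cCount σ p := by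
    have hsub : insert m (Finset.univ.filter (fun k : Fin n => k < m ∧ σ m < σ k))
        ⊆ Finset.univ.filter (fun k : Fin n => k < p ∧ σ p < σ k) := by
      intro k hk
      rw [Finset.mem_insert] at hk
      simp only [mem_filter, mem_univ, true_and]
      rcases hk with rfl | hk
      · exact ⟨hmp, hσm⟩
      · simp only [mem_filter, mem_univ, true_and] at hk
        exact ⟨lt_trans hk.1 hmp, lt_trans hσm hk.2⟩
    have := Finset.card_le_card hsub
    rw [Finset.card_insert_of_notMem (by simp)] at this
    simpa [cCount] using by omega
  have := h m p (le_of_lt hmp) hc1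
  omega

section Build

variable (c : Fin n → ℕ)

/-- the intended relation `σ a < σ b` -/
def L (a b : Fin n) : Prop :=
  (a.val < b.val ∧ c b ≤ a.val) ∨ (b.val < a.val ∧ b.val < c a)

variable {c}

lemma L_irrefl (a : Fin n) : ¬ L c a a := by simp [L]

lemma L_total {a b : Fin n} (h : a ≠ b) : L c a b ∨ L c b a := by
  have : a.val ≠ b.val := fun he => h (Fin.ext he)
  rcases lt_or_gt_of_ne this with hl | hl
  · rcases le_or_gt (c b) a.val with h1 | h1
    · exact Or.inl (Or.inl ⟨hl, h1⟩)
    · exact Or.inr (Or.inr ⟨hl, h1⟩)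
  · rcases le_or_gt (c a) b.val with h1 | h1
    · exact Or.inr (Or.inl ⟨hl, h1⟩)
    · exact Or.inl (Or.inr ⟨hl, h1⟩)

variable (h1 : ∀ p : Fin n, c p ≤ p.val)
    (h2 : ∀ q p : Fin n, q ≤ p → c p ≤ q.val → c p ≤ c q)

include h2 in
lemma L_trans {a b d : Fin n} (hab : L c a b) (hbd : L c b d) : L c a d := by
  rcases hab with ⟨hab1, hab2⟩ | ⟨hab1, hab2⟩ <;> rcases hbd with ⟨hbd1, hbd2⟩ | ⟨hbd1, hbd2⟩
  · -- a < b < d, c d ≤ b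
    have hcd := h2 b d (by rw [Fin.le_def]; omega) hbd2
    left; constructor
    · omega
    · by_contra hc
      push_neg at hc
      omega
  · -- a < b, c b ≤ a, d < b, d < c b
    have hca := h2 a b (by rw [Fin.le_def]; omega) hab2
    right; exact ⟨by omega, by omega⟩
  · -- b < a, b < c a, b < d, c d ≤ b
    rcases lt_trichotomy a.val d.val with hd | hd | hd
    · left; exact ⟨hd, by omega⟩
    · exfalso
      have had : a = d := Fin.ext hd
      subst had
      omega
    · right; refine ⟨hd, ?_⟩
      by_contra hc
      push_neg at hc
      have := h2 d a (by rw [Fin.le_def]; omega) (by omega)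
      omega
  · -- b < a, b < c a, d < b
    right; exact ⟨by omega, by omega⟩

instance (c : Fin n → ℕ) (a b : Fin n) : Decidable (L c a b) := by
  unfold L; infer_instance

variable (c) in
def g (b : Fin n) : ℕ := (Finset.univ.filter (fun a => L c a b)).card

include h2 in
lemma g_lt_of_L {a b : Fin n} (hab : L c a b) : g c a < g c b := by
  have hsub : insert a (Finset.univ.filter (fun x => L c x a))
      ⊆ Finset.univ.filter (fun x => L c x b) := by
    intro x hx
    rw [Finset.mem_insert] at hx
    simp only [mem_filter, mem_univ, true_and]
    rcases hx with rfl | hx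
    · exact hab
    · simp only [mem_filter, mem_univ, true_and] at hx
      exact L_trans h2 hx hab
  have := Finset.card_le_card hsub
  rw [Finset.card_insert_of_notMem (by simp [L_irrefl])] at this
  simpa [g] using this

include h2 in
lemma g_injective : Function.Injective (g c) := by
  intro a b hab
  by_contra hne
  rcases L_total hne with h | h
  · exact absurd hab (ne_of_lt (g_lt_of_L h2 h))
  · exact absurd hab.symm (ne_of_lt (g_lt_of_L h2 h))

lemma g_lt_n (b : Fin n) : g c b < n := by
  have hsub : Finset.univ.filter (fun a => L c a b) ⊆ Finset.univ.erase b := by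
    intro x hx
    simp only [mem_filter, mem_univ, true_and] at hx
    rw [Finset.mem_erase]
    refine ⟨?_, Finset.mem_univ x⟩
    rintro rfl
    exact L_irrefl _ hx
  have := Finset.card_le_card hsub
  rw [Finset.card_erase_of_mem (Finset.mem_univ b), Finset.card_univ, Fintype.card_fin] at this
  have hn : 0 < n := b.pos
  have : g c b ≤ n - 1 := this
  omega

include h1 h2 in
lemma exists_perm : ∃ σ : Equiv.Perm (Fin n), ∀ p, cCount σ p = c p := by
  classical
  let f : Fin n → Fin n := fun b => ⟨g c b, g_lt_n b⟩
  have hinj : Function.Injective f := by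
    intro a b hab
    exact g_injective h2 (congrArg Fin.val hab)
  have hbij : Function.Bijective f := Finite.injective_iff_bijective.mp hinj
  refine ⟨Equiv.ofBijective f hbij, ?_⟩
  intro p
  have hform : ∀ k : Fin n, k < p → (f p < f k ↔ k.val < c p) := by
    intro k hk
    have hne : k ≠ p := ne_of_lt hk
    constructor
    · intro hlt
      have : L c p k := by
        rcases L_total hne.symm with h | h
        · exact h
        · exact absurd hlt (asymm (by exact g_lt_of_L h2 h))
      rcases this with ⟨ha, _⟩ | ⟨_, hb⟩
      · exfalso; rw [Fin.lt_def] at hk; omega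
      · exact hb
    · intro hlt
      exact g_lt_of_L h2 (Or.inr ⟨by rw [Fin.lt_def] at hk; exact hk, hlt⟩)
  have : (Finset.univ.filter (fun k : Fin n => k < p ∧ f p < f k))
      = Finset.univ.filter (fun k : Fin n => k.val < c p) := by
    ext k
    simp only [mem_filter, mem_univ, true_and]
    constructor
    · rintro ⟨hk, hlt⟩
      exact (hform k hk).mp hlt
    · intro hk
      have hkp : k < p := by rw [Fin.lt_def]; have := h1 p; omega
      exact ⟨hkp, (hform k hkp).mpr hk⟩
  have hcc : cCount (Equiv.ofBijective f hbij) p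
      = (Finset.univ.filter (fun k : Fin n => k < p ∧ f p < f k)).card := rfl
  rw [hcc, this, card_filter_val_lt (c p) (by have := h1 p; have := p.isLt; omega)]

end Build
end Stmt13Aux


namespace Stmt13Aux
open Finset
variable {n : ℕ}

lemma eq_of_cCount_eq {σ τ : Equiv.Perm (Fin n)} (hσ : Avoids σ) (hτ : Avoids τ)
    (h : ∀ p, cCount σ p = cCount τ p) : σ = τ := by
  have hmono : StrictMono (fun u => τ (σ.symm u)) := by
    intro u v huv
    set k := σ.symm u with hk
    set p := σ.symm v with hp
    have hσk : σ k = u := σ.apply_symm_apply u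
    have hσp : σ p = v := σ.apply_symm_apply v
    have hkp : k ≠ p := by
      intro he; rw [he, hσp] at hσk; exact absurd hσk (ne_of_lt huv).symm
    rcases lt_or_gt_of_ne hkp with hlt | hlt
    · -- k < p, σ k < σ p
      have h1 : ¬ (σ p < σ k) := by rw [hσk, hσp]; exact asymm huv
      rw [char hσ hlt, h p] at h1
      have h2 : ¬ (τ p < τ k) := by rw [char hτ hlt]; exact h1
      have hne : τ k ≠ τ p := fun he => hkp (τ.injective he)
      exact lt_of_le_of_ne (not_lt.mp h2) hne
    ·
      have h1 : σ k < σ p := by rw [hσk, hσp]; exact huv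
      rw [char hσ hlt, h k] at h1
      exact (char hτ hlt).mpr h1
  have hid : StrictMono (id : Fin n → Fin n) := strictMono_id
  have hrange : Set.range (fun u => τ (σ.symm u)) = Set.range (id : Fin n → Fin n) := by
    rw [Set.range_id]
    exact Set.range_eq_univ.mpr (fun y => ⟨σ (τ.symm y), by simp⟩)
  haveI : WellFoundedLT (Fin n) := inferInstance
  have := (hmono.range_inj hid).mp hrange
  refine Equiv.ext fun x => ?_
  have := congrFun this (σ x)
  simpa using this.symm

end Stmt13Aux

open Stmt13Aux in
/-- The induced subposet, on 132-avoiding permutations, of the componentwise order on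
zero-count vectors is isomorphic to the Tamari lattice of order `n`, realized as
Huang–Tamari bracket vectors ordered by reverse componentwise comparison. -/
theorem stmt13 (n : ℕ) :
    ∃ e : {σ : Equiv.Perm (Fin n) //
            ¬ ∃ i j k : Fin n, i < j ∧ j < k ∧ σ i < σ k ∧ σ k < σ j} ≃
          {x : Fin n → Fin (n + 1) //
            (∀ i : Fin n, i.val + 1 ≤ (x i).val) ∧
            (∀ i j : Fin n, i ≤ j → j.val + 1 ≤ (x i).val → (x j).val ≤ (x i).val)},
      ∀ σ τ, (∀ p : Fin n, cCount σ.1 p ≤ cCount τ.1 p) ↔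
        (∀ i : Fin n, (e τ).1 i ≤ (e σ).1 i) := by
  classical
  have hrev : ∀ i : Fin n, (Fin.rev i).val = n - 1 - i.val := by
    intro i
    rw [Fin.val_rev]
    omega
  -- the forward map
  let F : {σ : Equiv.Perm (Fin n) //
            ¬ ∃ i j k : Fin n, i < j ∧ j < k ∧ σ i < σ k ∧ σ k < σ j} →
          {x : Fin n → Fin (n + 1) //
            (∀ i : Fin n, i.val + 1 ≤ (x i).val) ∧
            (∀ i j : Fin n, i ≤ j → j.val + 1 ≤ (x i).val → (x j).val ≤ (x i).val)} :=
    fun σ => ⟨fun i => ⟨n - cCount σ.1 i.rev, by omega⟩,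
      by
        intro i
        have h1 := cCount_le σ.1 i.rev
        have h2 := hrev i
        have h3 := i.isLt
        simp only
        omega,
      by
        intro i j hij hj
        have hs := star (σ := σ.1) σ.2 j.rev i.rev (Fin.rev_le_rev.mpr hij)
        have h1 := cCount_le σ.1 i.rev
        have h2 := hrev i
        have h3 := hrev j
        have h4 := i.isLt
        have h5 := j.isLt
        simp only at hj ⊢
        exact by omega⟩
  have hFval : ∀ σ i, ((F σ).1 i).val = n - cCount σ.1 i.rev := fun _ _ => rfl
  have hinj : Function.Injective F := by
    intro σ τ he
    have hv : ∀ p : Fin n, cCount σ.1 p = cCount τ.1 p := by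
      intro p
      have := congrArg (fun x => (x.1 p.rev).val) he
      simp only [hFval] at this
      rw [Fin.rev_rev] at this
      have h1 := cCount_le σ.1 p
      have h2 := cCount_le τ.1 p
      have h3 := p.isLt
      omega
    exact Subtype.ext (eq_of_cCount_eq σ.2 τ.2 hv)
  have hsurj : Function.Surjective F := by
    rintro ⟨x, hx1, hx2⟩
    set c : Fin n → ℕ := fun p => n - (x p.rev).val with hc
    have hxle : ∀ i : Fin n, (x i).val ≤ n := fun i => by have := (x i).isLt; omega
    have h1 : ∀ p : Fin n, c p ≤ p.val := by
      intro p
      have := hx1 p.rev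
      have := hrev p
      have := p.isLt
      have := hxle p.rev
      simp only [hc]
      omega
    have h2 : ∀ q p : Fin n, q ≤ p → c p ≤ q.val → c p ≤ c q := by
      intro q p hqp hcp
      have hij : p.rev ≤ q.rev := Fin.rev_le_rev.mpr hqp
      have hkey : q.rev.val + 1 ≤ (x p.rev).val := by
        have := hrev q
        have := q.isLt
        have := hxle p.rev
        have hq2 : q.val ≤ p.val := hqp
        have := p.isLt
        simp only [hc] at hcp
        omega
      have := hx2 p.rev q.rev hij hkey
      simp only [hc]
      omega
    obtain ⟨σ, hσc⟩ := exists_perm h1 h2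
    have havoid : Avoids σ := by
      apply star2
      intro q p hqp hle
      rw [hσc] at hle
      rw [hσc, hσc]
      exact h2 q p hqp hle
    refine ⟨⟨σ, havoid⟩, ?_⟩
    apply Subtype.ext
    funext i
    apply Fin.ext
    rw [hFval]
    simp only [hσc, hc, Fin.rev_rev]
    have := hxle i
    have := hx1 i
    omega
  refine ⟨Equiv.ofBijective F (show Function.Bijective F from ⟨hinj, hsurj⟩), ?_⟩
  intro σ τ
  simp only [Equiv.ofBijective_apply]
  constructor
  · intro h i
    rw [Fin.le_def, hFval, hFval]
    have h1 := cCount_le τ.1 i.rev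
    have h2 := hrev i
    have := h i.rev
    omega
  · intro h p
    have := h p.rev
    rw [Fin.le_def, hFval, hFval, Fin.rev_rev] at this
    have h1 := cCount_le τ.1 p
    have h2 := cCount_le σ.1 p
    have h3 := p.isLt
    omega
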